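/- Let A, B be jointly distributed finitely-supported random variables. If B takes at most 2^λ values, then the average min-entropy satisfies Ĥ_∞(A|B) ≥ Ĥ_∞(A,B) - λ ≥ H_∞(A) - λ. -/
import Mathlib


open Finset

/-- `pr μ A a` is the probability that the random variable `A` takes value `a`
under the finite measure `μ`. -/
noncomputable def pr {Ω α : Type*} [Fintype Ω] [DecidableEq α]
    (μ : Ω → ℝ) (A : Ω → α) (a : α) : ℝ :=
  ∑ ω ∈ Finset.univ.filter (fun ω => A ω = a), μ ω

/-- Min-entropy (base 2) of the random variable `A` under measure `μ`. -/
noncomputable def minH {Ω α : Type*} [Fintype Ω] [Fintype α] [Nonempty α] [DecidableEq α]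
    (μ : Ω → ℝ) (A : Ω → α) : ℝ :=
  - Real.logb 2 (Finset.univ.sup' Finset.univ_nonempty (fun a => pr μ A a))

/-- Average min-entropy `Ĥ_∞(A|B) = -log₂ E_{b∼B}[max_a Pr[A=a|B=b]]`. -/
noncomputable def avgMinH {Ω α β : Type*} [Fintype Ω] [Fintype α] [Fintype β]
    [Nonempty α] [DecidableEq α] [DecidableEq β]
    (μ : Ω → ℝ) (A : Ω → α) (B : Ω → β) : ℝ :=
  - Real.logb 2 (∑ b, pr μ B b *
      Finset.univ.sup' Finset.univ_nonempty
        (fun a => pr μ (fun ω => (A ω, B ω)) (a, b) / pr μ B b))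

lemma pr_nonneg {Ω γ : Type*} [Fintype Ω] [DecidableEq γ]
    (μ : Ω → ℝ) (hμ : ∀ ω, 0 ≤ μ ω) (C : Ω → γ) (c : γ) : 0 ≤ pr μ C c :=
  Finset.sum_nonneg fun ω _ => hμ ω

lemma pr_sum_eq_one {Ω γ : Type*} [Fintype Ω] [Fintype γ] [DecidableEq γ]
    (μ : Ω → ℝ) (hsum : ∑ ω, μ ω = 1) (C : Ω → γ) : ∑ c, pr μ C c = 1 := by
  simpa [pr] using (Finset.sum_fiberwise Finset.univ C μ).trans hsum

/-- If `B` takes at most `2^l` values then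
`Ĥ_∞(A|B) ≥ Ĥ_∞(A,B) - l ≥ H_∞(A) - l`. -/
theorem stmt3 {Ω α β : Type*} [Fintype Ω] [Fintype α] [Fintype β]
    [DecidableEq α] [DecidableEq β] [Nonempty α] [Nonempty β]
    (μ : Ω → ℝ) (hμ : ∀ ω, 0 ≤ μ ω) (hsum : ∑ ω, μ ω = 1)
    (A : Ω → α) (B : Ω → β) (l : ℕ) (hB : Fintype.card β ≤ 2 ^ l) :
    minH μ (fun ω => (A ω, B ω)) - (l : ℝ) ≤ avgMinH μ A B ∧
      minH μ A - (l : ℝ) ≤ minH μ (fun ω => (A ω, B ω)) - (l : ℝ) := by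
  classical
  simp only [minH, avgMinH]
  set AB : Ω → α × β := fun ω => (A ω, B ω) with hABdef
  set M : ℝ := Finset.univ.sup' Finset.univ_nonempty (fun p => pr μ AB p) with hM
  set MA : ℝ := Finset.univ.sup' Finset.univ_nonempty (fun a => pr μ A a) with hMA
  set S : ℝ := ∑ b, pr μ B b * Finset.univ.sup' Finset.univ_nonempty
      (fun a => pr μ AB (a, b) / pr μ B b) with hS
  -- basic facts
  have hABle : ∀ a b, pr μ AB (a, b) ≤ pr μ B b := by
    intro a b
    apply Finset.sum_le_sum_of_subset_of_nonneg
    · intro ω hω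
      simp only [Finset.mem_filter, Finset.mem_univ, true_and, hABdef, Prod.mk.injEq] at hω ⊢
      exact hω.2
    · exact fun ω _ _ => hμ ω
  have hABleA : ∀ a b, pr μ AB (a, b) ≤ pr μ A a := by
    intro a b
    apply Finset.sum_le_sum_of_subset_of_nonneg
    · intro ω hω
      simp only [Finset.mem_filter, Finset.mem_univ, true_and, hABdef, Prod.mk.injEq] at hω ⊢
      exact hω.1
    · exact fun ω _ _ => hμ ω
  have hfiber : ∀ b, ∑ a, pr μ AB (a, b) = pr μ B b := by
    intro b
    have := Finset.sum_fiberwise (Finset.univ.filter fun ω => B ω = b) A μ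
    rw [pr, ← this]
    apply Finset.sum_congr rfl
    intro a _
    rw [pr]
    congr 1
    rw [Finset.filter_filter]
    apply Finset.filter_congr
    intro ω _
    simp [hABdef, Prod.mk.injEq, and_comm]
  have hMle : ∀ a b, pr μ AB (a, b) ≤ M := fun a b =>
    Finset.le_sup' (fun p => pr μ AB p) (Finset.mem_univ (a, b))
  -- positivity witnesses
  obtain ⟨b₀, hb₀⟩ : ∃ b, 0 < pr μ B b := by
    by_contra h
    push_neg at h
    have : (∑ b, pr μ B b) ≤ 0 := Finset.sum_nonpos fun b _ => h b
    rw [pr_sum_eq_one μ hsum B] at this; linarith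
  obtain ⟨a₀, ha₀⟩ : ∃ a, 0 < pr μ AB (a, b₀) := by
    by_contra h
    push_neg at h
    have : (∑ a, pr μ AB (a, b₀)) ≤ 0 := Finset.sum_nonpos fun a _ => h a
    rw [hfiber b₀] at this; linarith
  have hMpos : 0 < M := lt_of_lt_of_le ha₀ (hMle a₀ b₀)
  -- bound each term of S by M
  have hterm : ∀ b, pr μ B b * Finset.univ.sup' Finset.univ_nonempty
      (fun a => pr μ AB (a, b) / pr μ B b) ≤ M := by
    intro b
    rcases eq_or_lt_of_le (pr_nonneg μ hμ B b) with h0 | hpos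
    · rw [← h0, zero_mul]; exact hMpos.le
    · have hsup : Finset.univ.sup' Finset.univ_nonempty
          (fun a => pr μ AB (a, b) / pr μ B b) ≤ M / pr μ B b := by
        apply Finset.sup'_le
        intro a _
        exact div_le_div_of_nonneg_right (hMle a b) hpos.le
      calc pr μ B b * Finset.univ.sup' Finset.univ_nonempty
            (fun a => pr μ AB (a, b) / pr μ B b)
          ≤ pr μ B b * (M / pr μ B b) :=
            mul_le_mul_of_nonneg_left hsup hpos.le
        _ = M := by field_simp
  -- S ≤ 2^l * M
  have hSle : S ≤ (2 : ℝ) ^ l * M := by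
    calc S ≤ ∑ _b : β, M := Finset.sum_le_sum fun b _ => hterm b
      _ = (Fintype.card β : ℝ) * M := by rw [Finset.sum_const, Finset.card_univ]; ring
      _ ≤ (2 : ℝ) ^ l * M := by
          apply mul_le_mul_of_nonneg_right _ hMpos.le
          exact_mod_cast hB
  -- S > 0
  have hSnonneg : ∀ b, 0 ≤ pr μ B b * Finset.univ.sup' Finset.univ_nonempty
      (fun a => pr μ AB (a, b) / pr μ B b) := by
    intro b
    apply mul_nonneg (pr_nonneg μ hμ B b)
    exact le_trans (div_nonneg (pr_nonneg μ hμ AB _) (pr_nonneg μ hμ B b))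
      (Finset.le_sup' (fun a => pr μ AB (a, b) / pr μ B b) (Finset.mem_univ (Classical.arbitrary α)))
  have hSpos : 0 < S := by
    apply Finset.sum_pos' (fun b _ => hSnonneg b)
    refine ⟨b₀, Finset.mem_univ b₀, ?_⟩
    have hle : pr μ AB (a₀, b₀) / pr μ B b₀ ≤ Finset.univ.sup' Finset.univ_nonempty
        (fun a => pr μ AB (a, b₀) / pr μ B b₀) :=
      Finset.le_sup' (fun a => pr μ AB (a, b₀) / pr μ B b₀) (Finset.mem_univ a₀)
    have : 0 < pr μ B b₀ * (pr μ AB (a₀, b₀) / pr μ B b₀) := by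
      rw [mul_div_cancel₀ _ (ne_of_gt hb₀)]; exact ha₀
    exact lt_of_lt_of_le this (mul_le_mul_of_nonneg_left hle hb₀.le)
  -- logb computations
  have hlog2 : Real.logb 2 ((2 : ℝ) ^ l * M) = (l : ℝ) + Real.logb 2 M := by
    rw [Real.logb_mul (by positivity) (ne_of_gt hMpos), Real.logb_pow,
      Real.logb_self_eq_one (by norm_num)]
    ring
  have hMleMA : M ≤ MA := by
    apply Finset.sup'_le
    intro p _
    exact le_trans (hABleA p.1 p.2) (Finset.le_sup' _ (Finset.mem_univ p.1))
  constructor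
  · have h1 : Real.logb 2 S ≤ Real.logb 2 ((2 : ℝ) ^ l * M) :=
      Real.logb_le_logb_of_le (by norm_num) hSpos hSle
    rw [hlog2] at h1
    linarith
  · have h2 : Real.logb 2 M ≤ Real.logb 2 MA :=
      Real.logb_le_logb_of_le (by norm_num) hMpos hMleMA
    linarith
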